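/- arXiv:2011.03150 — 7 statements merged into one kernel-verified Lean document; each statement's English description precedes it below -/
import Mathlib

section
/- If f : ℝ → X is Stepanov p-almost periodic (1 ≤ p < ∞) and uniformly continuous on ℝ, then f is Bohr almost periodic. -/
/-! If `‖f (t + τ) - f t‖ ≥ 3η` at some `t`, uniform continuity (with modulus `δ` for `η`) keeps
`‖f (s + τ) - f s‖ ≥ η` for `s ∈ (t, t + min δ 1)`, so the Stepanov integral over `(t, t + 1]` is at least
`η ^ p * min δ 1`. Hence every Stepanov almost period for `(η ^ p * min δ 1) ^ (1 / p)` is a Bohr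
almost period for `3η`. -/

open MeasureTheory Set

/-- Stepanov `p`-almost periodicity. -/
def StepanovAP {X : Type*} [NormedAddCommGroup X] (p : ℝ) (f : ℝ → X) : Prop :=
  ∀ ε : ℝ, 0 < ε → ∃ l : ℝ, 0 < l ∧ ∀ a : ℝ, ∃ τ ∈ Set.Icc a (a + l),
    ∀ t : ℝ, (∫ s in Set.Ioc t (t + 1), ‖f (s + τ) - f s‖ ^ p) ^ (1 / p) < ε

/-- Bohr almost periodicity. -/
def BohrAP {X : Type*} [NormedAddCommGroup X] (f : ℝ → X) : Prop :=
  Continuous f ∧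
  ∀ ε : ℝ, 0 < ε → ∃ l : ℝ, 0 < l ∧ ∀ a : ℝ, ∃ τ ∈ Set.Icc a (a + l),
    ∀ t : ℝ, ‖f (t + τ) - f t‖ < ε

section

variable {X : Type*} [NormedAddCommGroup X]

lemma norm_sub_translate_lt_of_dist_lt {f : ℝ → X} {δ η : ℝ}
    (hmod : ∀ x y, dist x y < δ → dist (f x) (f y) < η) {s t : ℝ} (hst : dist s t < δ)
    (τ : ℝ) : ‖f (t + τ) - f t‖ < ‖f (s + τ) - f s‖ + 2 * η := by
  have hτ := hmod (s + τ) (t + τ) (by rwa [dist_add_right])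
  have h₀ := hmod s t hst
  rw [← dist_eq_norm, ← dist_eq_norm]
  calc dist (f (t + τ)) (f t)
      ≤ dist (f (t + τ)) (f (s + τ)) + dist (f (s + τ)) (f s) + dist (f s) (f t) :=
        dist_triangle4 _ _ _ _
    _ < dist (f (s + τ)) (f s) + 2 * η := by rw [dist_comm (f (t + τ))]; linarith

lemma norm_sub_translate_lt_of_stepanov_lt {f : ℝ → X} (hf : Continuous f) {p δ η τ t : ℝ}
    (hp : 0 < p) (hδ : 0 < δ) (hη : 0 < η)
    (hmod : ∀ x y, dist x y < δ → dist (f x) (f y) < η)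
    (hτ : (∫ s in Ioc t (t + 1), ‖f (s + τ) - f s‖ ^ p) ^ (1 / p) < (η ^ p * min δ 1) ^ (1 / p)) :
    ‖f (t + τ) - f t‖ < 3 * η := by
  set d := min δ 1
  have hd : 0 < d := lt_min hδ one_pos
  by_contra! hbig
  have hlow : ∀ s ∈ Ioo t (t + d), η ^ p ≤ ‖f (s + τ) - f s‖ ^ p := fun s hs => by
    have hst : dist s t < δ := by
      rw [Real.dist_eq, abs_of_pos (sub_pos.2 hs.1)]
      linarith [hs.2, min_le_left δ 1]
    have := norm_sub_translate_lt_of_dist_lt hmod hst τ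
    exact Real.rpow_le_rpow hη.le (by linarith) hp.le
  have hsub : Ioo t (t + d) ⊆ Ioc t (t + 1) :=
    Ioo_subset_Ioc_self.trans (Ioc_subset_Ioc_right (by linarith [min_le_right δ 1]))
  have hint : IntegrableOn (fun s => ‖f (s + τ) - f s‖ ^ p) (Ioc t (t + 1)) :=
    (((hf.comp (continuous_add_const τ)).sub hf).norm.rpow_const
      fun _ => Or.inr hp.le).integrableOn_Ioc
  have hmass : η ^ p * d ≤ ∫ s in Ioc t (t + 1), ‖f (s + τ) - f s‖ ^ p :=
    calc η ^ p * d = η ^ p * volume.real (Ioo t (t + d)) := by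
          rw [Real.volume_real_Ioo_of_le (by linarith), add_sub_cancel_left]
      _ ≤ ∫ s in Ioo t (t + d), ‖f (s + τ) - f s‖ ^ p :=
          setIntegral_ge_of_const_le_real measurableSet_Ioo measure_Ioo_lt_top.ne hlow
            (hint.mono_set hsub)
      _ ≤ ∫ s in Ioc t (t + 1), ‖f (s + τ) - f s‖ ^ p :=
          setIntegral_mono_set hint (Filter.Eventually.of_forall fun _ => by positivity)
            (Filter.Eventually.of_forall hsub)
  exact hτ.not_ge (Real.rpow_le_rpow (by positivity) hmass (by positivity))

end

theorem stepanovAP_uniformContinuous_implies_bohrAP_general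
    {X : Type*} [NormedAddCommGroup X]
    (p : ℝ) (hp : 1 ≤ p) (f : ℝ → X)
    (hap : StepanovAP p f) (huc : UniformContinuous f) : BohrAP f := by
  refine ⟨huc.continuous, fun ε hε => ?_⟩
  obtain ⟨δ, hδ, hmod⟩ := Metric.uniformContinuous_iff.mp huc (ε / 3) (by positivity)
  obtain ⟨l, hl, hperiods⟩ := hap (((ε / 3) ^ p * min δ 1) ^ (1 / p))
    (by have := lt_min hδ one_pos; positivity)
  refine ⟨l, hl, fun a => ?_⟩
  obtain ⟨τ, hτa, hτ⟩ := hperiods a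
  refine ⟨τ, hτa, fun t => ?_⟩
  have := norm_sub_translate_lt_of_stepanov_lt huc.continuous (by linarith) hδ (by positivity)
    hmod (hτ t)
  rwa [mul_div_cancel₀ _ three_ne_zero] at this

/-- If `f` is Stepanov `p`-almost periodic and uniformly continuous, then `f`
is Bohr almost periodic. -/
theorem stepanovAP_uniformContinuous_implies_bohrAP
    {X : Type*} [NormedAddCommGroup X] [NormedSpace ℝ X] [CompleteSpace X]
    (p : ℝ) (hp : 1 ≤ p) (f : ℝ → X)
    (hap : StepanovAP p f) (huc : UniformContinuous f) : BohrAP f :=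
  stepanovAP_uniformContinuous_implies_bohrAP_general p hp f hap huc
end

section
/- A measurable function φ : ℝ × [0,1] → X is the Bochner transform of some f : ℝ → X (i.e. φ(t,s) = f(t+s)) if and only if φ(t+τ, s−τ) = φ(t,s) for all t ∈ ℝ, s ∈ [0,1] and τ ∈ [s−1, s]. -/
open Set

theorem bochner_transform_characterization_general
    {X : Type*} (φ : ℝ → ℝ → X) :
    (∃ f : ℝ → X, ∀ t : ℝ, ∀ s ∈ Set.Icc (0 : ℝ) 1, φ t s = f (t + s)) ↔
    (∀ t : ℝ, ∀ s ∈ Set.Icc (0 : ℝ) 1, ∀ τ ∈ Set.Icc (s - 1) s,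
      φ (t + τ) (s - τ) = φ t s) := by
  constructor
  · rintro ⟨f, hf⟩ t s hs τ ⟨hτ₁, hτ₂⟩
    have hsτ : s - τ ∈ Icc (0 : ℝ) 1 := ⟨sub_nonneg.2 hτ₂, by linarith⟩
    rw [hf t s hs, hf (t + τ) (s - τ) hsτ, add_add_sub_cancel]
  · intro h
    -- Sliding by `τ = s` moves every point of the window to its left endpoint.
    refine ⟨fun x => φ x 0, fun t s hs => ?_⟩
    simpa using (h t s hs s ⟨by linarith [hs.2], le_rfl⟩).symm

/-- A measurable function `φ : ℝ × [0,1] → X` is the Bochner transform of some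
`f : ℝ → X` (i.e. `φ t s = f (t + s)` for `s ∈ [0,1]`) if and only if
`φ (t+τ) (s-τ) = φ t s` for all `t ∈ ℝ`, `s ∈ [0,1]` and `τ ∈ [s-1, s]`. -/
theorem bochner_transform_characterization
    {X : Type*} [NormedAddCommGroup X] [NormedSpace ℝ X] [CompleteSpace X]
    [MeasurableSpace X] (φ : ℝ → ℝ → X)
    (hmeas : Measurable (Function.uncurry φ)) :
    (∃ f : ℝ → X, ∀ t : ℝ, ∀ s ∈ Set.Icc (0 : ℝ) 1, φ t s = f (t + s)) ↔
    (∀ t : ℝ, ∀ s ∈ Set.Icc (0 : ℝ) 1, ∀ τ ∈ Set.Icc (s - 1) s,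
      φ (t + τ) (s - τ) = φ t s) :=
  bochner_transform_characterization_general φ
end

section
/- Let μ be a positive measure on ℝ with μ(ℝ) = ∞, finite on compact intervals, and satisfying condition (M). Then the space of Stepanov μ-ergodic functions of order p is translation invariant: if f is μ-S^p-ergodic then so is t ↦ f(t + a) for every a ∈ ℝ. -/
open MeasureTheory Set Filter

/-- Condition (M): for every `τ` there exist `β > 0` and a bounded interval `I` such that
`μ(A + τ) ≤ β μ(A)` whenever `A` is Borel and disjoint from `I`. -/
def ConditionM (μ : Measure ℝ) : Prop :=
  ∀ τ : ℝ, ∃ β : ℝ, 0 < β ∧ ∃ a b : ℝ, ∀ A : Set ℝ, MeasurableSet A →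
    A ∩ Set.Icc a b = ∅ → μ ((fun x => x + τ) '' A) ≤ ENNReal.ofReal β * μ A

/-- `f` is Stepanov `μ`-`S^p`-ergodic. -/
def StepanovErgodic {X : Type*} [NormedAddCommGroup X]
    (μ : Measure ℝ) (p : ℝ) (f : ℝ → X) : Prop :=
  (∃ C : ℝ, ∀ t : ℝ, (∫ s in Set.Ioc t (t + 1), ‖f s‖ ^ p) ^ (1 / p) ≤ C) ∧
  Tendsto (fun r : ℝ =>
      (∫ t in Set.Icc (-r) r, (∫ s in Set.Ioc t (t + 1), ‖f s‖ ^ p) ^ (1 / p) ∂μ) /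
        (μ (Set.Icc (-r) r)).toReal)
    atTop (nhds 0)

open Topology
open scoped ENNReal

/-! The Stepanov window of `f (· + a)` at `t` is the window of `f` at `t + a`, so only the
ergodic averages need work. Off a bounded interval `K`, condition (M) dominates the push-forward
of `μ` under `t ↦ t + a` by a multiple `β • μ`. For the bounded window function `F ≤ C` this gives
`∫_{[-r,r]} F (t + a) dμ ≤ C μ(K) + β ∫_{[-r-|a|, r+|a|]} F dμ`, and applied to indicators it gives
`μ[-r-|a|, r+|a|] ≤ c μ[-r,r]` for large `r`. As `μ[-r,r] → ∞`, the shifted average at `r` is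
at most `C μ(K) / μ[-r,r] + β c` times the unshifted average at `r + |a|`, which tends to `0`. -/

theorem continuousOn_of_forall_continuousOn_Icc {α β : Type*} [LinearOrder α]
    [TopologicalSpace α] [OrderTopology α] [TopologicalSpace β] {S : Set α} {g : α → β}
    (hg : ∀ x ∈ S, ∀ y ∈ S, x ≤ y → ContinuousOn g (Icc x y)) :
    ContinuousOn g S := by
  intro t ht
  obtain ⟨x, hxS, hxt, hx⟩ : ∃ x ∈ S, x ≤ t ∧ ∀ᶠ z in 𝓝[S] t, x ≤ z := by
    by_cases hlt : ∃ x ∈ S, x < t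
    · obtain ⟨x, hxS, hxt⟩ := hlt
      exact ⟨x, hxS, hxt.le, eventually_nhdsWithin_of_eventually_nhds
        ((eventually_gt_nhds hxt).mono fun _ => le_of_lt)⟩
    · push Not at hlt
      exact ⟨t, ht, le_rfl, eventually_nhdsWithin_of_forall hlt⟩
  obtain ⟨y, hyS, hty, hy⟩ : ∃ y ∈ S, t ≤ y ∧ ∀ᶠ z in 𝓝[S] t, z ≤ y := by
    by_cases hgt : ∃ y ∈ S, t < y
    · obtain ⟨y, hyS, hty⟩ := hgt
      exact ⟨y, hyS, hty.le, eventually_nhdsWithin_of_eventually_nhds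
        ((eventually_lt_nhds hty).mono fun _ => le_of_lt)⟩
    · push Not at hgt
      exact ⟨t, ht, le_rfl, eventually_nhdsWithin_of_forall hgt⟩
  exact (hg x hxS y hyS (hxt.trans hty) t ⟨hxt, hty⟩).mono_of_mem_nhdsWithin (hx.and hy)

theorem measurable_of_continuousOn_iUnion {α β ι : Type*} [TopologicalSpace α]
    [MeasurableSpace α] [OpensMeasurableSpace α] [TopologicalSpace β] [MeasurableSpace β]
    [BorelSpace β] [Countable ι] {g : α → β} {S : ι → Set α} (hS : ∀ i, MeasurableSet (S i))
    (hg : ∀ i, ContinuousOn g (S i)) (hcover : ⋃ i, S i = univ) : Measurable g := by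
  refine measurable_of_isOpen fun U hU => ?_
  have hsplit : g ⁻¹' U = ⋃ i, g ⁻¹' U ∩ S i := by
    rw [← inter_iUnion, hcover, inter_univ]
  rw [hsplit]
  refine .iUnion fun i => ?_
  obtain ⟨V, hV, hVeq⟩ := continuousOn_iff'.1 (hg i) U hU
  exact hVeq ▸ hV.measurableSet.inter (hS i)

section Window

theorem integrableOn_Ioc_of_windows {h : ℝ → ℝ} {x y : ℝ} (hx : IntegrableOn h (Ioc x (x + 1)))
    (hy : IntegrableOn h (Ioc y (y + 1))) (hxy : y ≤ x + 1) : IntegrableOn h (Ioc x (y + 1)) := by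
  refine (hx.union hy).mono_set fun s hs => ?_
  rcases le_or_gt s (x + 1) with hle | hgt
  · exact Or.inl ⟨hs.1, hle⟩
  · exact Or.inr ⟨hxy.trans_lt hgt, hs.2⟩

theorem continuousOn_integral_Ioc_add_one {h : ℝ → ℝ} {t₁ t₂ : ℝ} (h₁₂ : t₁ ≤ t₂)
    (hint : IntegrableOn h (Ioc t₁ (t₂ + 1))) :
    ContinuousOn (fun t => ∫ s in Ioc t (t + 1), h s) (Icc t₁ t₂) := by
  have hIcc : IntegrableOn h (uIcc t₁ (t₂ + 1)) := by
    rwa [uIcc_of_le (by linarith), integrableOn_Icc_iff_integrableOn_Ioc]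
  have hprim := intervalIntegral.continuousOn_primitive_interval hIcc
  have hsub : ∀ y ∈ Icc t₁ (t₂ + 1), y ∈ uIcc t₁ (t₂ + 1) := fun y hy => by
    rwa [uIcc_of_le (by linarith)]
  have hii : ∀ y ∈ Icc t₁ (t₂ + 1), IntervalIntegrable h volume t₁ y := fun y hy =>
    (hIcc.mono_set (uIcc_subset_uIcc_left (hsub y hy))).intervalIntegrable
  refine ((hprim.comp (continuous_add_const 1).continuousOn fun t ht => hsub _ ?_).sub
    (hprim.mono fun t ht => hsub _ ?_)).congr fun t ht => ?_
  · exact ⟨by linarith [ht.1], by linarith [ht.2]⟩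
  · exact ⟨ht.1, by linarith [ht.2]⟩
  · rw [Pi.sub_apply, Function.comp_apply,
      intervalIntegral.integral_interval_sub_left
        (hii _ ⟨by linarith [ht.1], by linarith [ht.2]⟩) (hii _ ⟨ht.1, by linarith [ht.2]⟩),
      intervalIntegral.integral_of_le (by linarith)]

theorem measurable_integral_Ioc_add_one (h : ℝ → ℝ) :
    Measurable fun t => ∫ s in Ioc t (t + 1), h s := by
  set T := {t : ℝ | IntegrableOn h (Ioc t (t + 1))}
  set S : ℤ → Set ℝ := fun n => T ∩ Icc (n : ℝ) (n + 1)
  have hspread : ∀ n, ∀ x ∈ S n, ∀ y ∈ S n, IntegrableOn h (Ioc x (y + 1)) :=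
    fun n x hx y hy => integrableOn_Ioc_of_windows hx.1 hy.1 (by linarith [hx.2.1, hy.2.2])
  -- Each `S n` is order-connected, hence measurable, although `h` need not be measurable.
  have hS : ∀ n, MeasurableSet (S n) := fun n => OrdConnected.measurableSet
    ⟨fun x hx y hy z hz =>
      ⟨(hspread n x hx y hy).mono_set (Ioc_subset_Ioc hz.1 (by linarith [hz.2])),
        hx.2.1.trans hz.1, hz.2.trans hy.2.2⟩⟩
  have hT : T = ⋃ n, S n := by
    rw [← inter_iUnion, iUnion_Icc_intCast, inter_univ]
  -- Off `T` the Bochner integral takes its junk value `0`.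
  refine measurable_of_continuousOn_iUnion (S := fun i : Option ℤ => i.elim Tᶜ S)
    (fun i => ?_) (fun i => ?_) ?_
  · cases i with
    | none => exact (hT ▸ MeasurableSet.iUnion hS).compl
    | some n => exact hS n
  · cases i with
    | none => exact continuousOn_const.congr fun t ht => integral_undef ht
    | some n => exact continuousOn_of_forall_continuousOn_Icc fun x hx y hy hxy =>
        continuousOn_integral_Ioc_add_one hxy (hspread n x hx y hy)
  · simp only [iUnion_option, Option.elim, ← hT, compl_union_self]

theorem setIntegral_Ioc_comp_add_right {E : Type*} [NormedAddCommGroup E] [NormedSpace ℝ E]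
    (h : ℝ → E) (a t : ℝ) :
    ∫ s in Ioc t (t + 1), h (s + a) = ∫ s in Ioc (t + a) (t + a + 1), h s := by
  rw [← intervalIntegral.integral_of_le (by linarith),
    ← intervalIntegral.integral_of_le (by linarith), intervalIntegral.integral_comp_add_right,
    add_right_comm]

end Window

noncomputable def centeredAverage (μ : Measure ℝ) (g : ℝ → ℝ) (r : ℝ) : ℝ :=
  (∫ t in Icc (-r) r, g t ∂μ) / (μ (Icc (-r) r)).toReal

section Stepanov

variable {X : Type*} [NormedAddCommGroup X]

noncomputable def stepanovLocalNorm (p : ℝ) (f : ℝ → X) (t : ℝ) : ℝ :=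
  (∫ s in Ioc t (t + 1), ‖f s‖ ^ p) ^ (1 / p)

theorem stepanovErgodic_iff {μ : Measure ℝ} {p : ℝ} {f : ℝ → X} :
    StepanovErgodic μ p f ↔ (∃ C, ∀ t, stepanovLocalNorm p f t ≤ C) ∧
      Tendsto (centeredAverage μ (stepanovLocalNorm p f)) atTop (𝓝 0) :=
  Iff.rfl

theorem stepanovLocalNorm_nonneg (p : ℝ) (f : ℝ → X) (t : ℝ) : 0 ≤ stepanovLocalNorm p f t :=
  Real.rpow_nonneg (integral_nonneg fun _ => Real.rpow_nonneg (norm_nonneg _) _) _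

theorem measurable_stepanovLocalNorm (p : ℝ) (f : ℝ → X) :
    Measurable (stepanovLocalNorm p f) :=
  (measurable_integral_Ioc_add_one _).pow_const _

theorem stepanovLocalNorm_comp_add_right (p : ℝ) (f : ℝ → X) (a t : ℝ) :
    stepanovLocalNorm p (fun s => f (s + a)) t = stepanovLocalNorm p f (t + a) := by
  rw [stepanovLocalNorm, setIntegral_Ioc_comp_add_right (fun s => ‖f s‖ ^ p), stepanovLocalNorm]

end Stepanov

section MeasureGrowth

variable {μ : Measure ℝ}

theorem tendsto_measure_Icc_neg_atTop (hμ_inf : μ univ = ⊤) :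
    Tendsto (fun r => μ (Icc (-r) r)) atTop (𝓝 ⊤) := by
  have hmono : Monotone fun r : ℝ => Icc (-r) r := fun r R hrR =>
    Icc_subset_Icc (neg_le_neg hrR) hrR
  have hcover : ⋃ r : ℝ, Icc (-r) r = univ :=
    eq_univ_of_forall fun x => mem_iUnion.2 ⟨|x|, neg_abs_le x, le_abs_self x⟩
  simpa only [hcover, hμ_inf, Function.comp_def] using
    tendsto_measure_iUnion_atTop (μ := μ) hmono

theorem tendsto_measure_Icc_neg_toReal_atTop (hμ_inf : μ univ = ⊤)
    (hμ_fin : ∀ a b : ℝ, μ (Icc a b) < ⊤) :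
    Tendsto (fun r => (μ (Icc (-r) r)).toReal) atTop atTop := by
  have htop := tendsto_measure_Icc_neg_atTop hμ_inf
  refine tendsto_atTop.2 fun b => ?_
  filter_upwards [ENNReal.tendsto_nhds_top_iff_nnreal.1 htop b.toNNReal] with r hr
  calc b ≤ b.toNNReal := Real.le_coe_toNNReal b
    _ ≤ (μ (Icc (-r) r)).toReal := by
      rw [← ENNReal.coe_toReal]; exact ENNReal.toReal_mono (hμ_fin _ _).ne hr.le

theorem ConditionM.exists_map_restrict_compl_le (hM : ConditionM μ) (τ : ℝ) :
    ∃ β : ℝ≥0∞, β ≠ ⊤ ∧ ∃ c d : ℝ, (μ.restrict (Icc c d)ᶜ).map (· + τ) ≤ β • μ := by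
  obtain ⟨β, -, c, d, hβ⟩ := hM (-τ)
  refine ⟨ENNReal.ofReal β, ENNReal.ofReal_ne_top, c - τ, d - τ, Measure.le_iff.2 fun s hs => ?_⟩
  have himage : (· + -τ) '' (s \ Icc c d) = (· + τ) ⁻¹' s ∩ (Icc (c - τ) (d - τ))ᶜ := by
    ext x
    simp only [mem_image, Set.mem_sdiff, mem_preimage, mem_inter_iff, mem_compl_iff, mem_Icc]
    constructor
    · rintro ⟨y, ⟨hys, hy⟩, rfl⟩
      refine ⟨by simpa using hys, fun h => hy ⟨?_, ?_⟩⟩ <;> linarith [h.1, h.2]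
    · rintro ⟨hxs, hx⟩
      refine ⟨x + τ, ⟨hxs, fun h => hx ⟨?_, ?_⟩⟩, by ring⟩ <;> linarith [h.1, h.2]
  rw [Measure.map_apply (measurable_add_const τ) hs,
    Measure.restrict_apply (measurable_add_const τ hs), Measure.smul_apply, smul_eq_mul,
    ← himage]
  calc μ ((· + -τ) '' (s \ Icc c d)) ≤ ENNReal.ofReal β * μ (s \ Icc c d) :=
        hβ _ (hs.diff measurableSet_Icc) sdiff_inter_self
    _ ≤ ENNReal.ofReal β * μ s := by gcongr; exact sdiff_subset

theorem ConditionM.exists_lintegral_comp_add_le (hμ_fin : ∀ a b : ℝ, μ (Icc a b) < ⊤)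
    (hM : ConditionM μ) (τ : ℝ) :
    ∃ β M : ℝ≥0∞, β ≠ ⊤ ∧ M ≠ ⊤ ∧ ∀ g : ℝ → ℝ≥0∞, Measurable g → ∀ C, (∀ t, g t ≤ C) →
      ∫⁻ t, g (t + τ) ∂μ ≤ C * M + β * ∫⁻ t, g t ∂μ := by
  obtain ⟨β, hβ, c, d, hmap⟩ := hM.exists_map_restrict_compl_le τ
  refine ⟨β, μ (Icc c d), hβ, (hμ_fin c d).ne, fun g hg C hgC => ?_⟩
  rw [← lintegral_add_compl _ measurableSet_Icc]
  gcongr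
  · calc ∫⁻ t in Icc c d, g (t + τ) ∂μ ≤ ∫⁻ _ in Icc c d, C ∂μ := lintegral_mono fun t => hgC _
      _ = C * μ (Icc c d) := setLIntegral_const _ _
  · calc ∫⁻ t in (Icc c d)ᶜ, g (t + τ) ∂μ = ∫⁻ t, g t ∂(μ.restrict (Icc c d)ᶜ).map (· + τ) :=
          (lintegral_map hg (measurable_add_const τ)).symm
      _ ≤ ∫⁻ t, g t ∂(β • μ) := lintegral_mono' hmap le_rfl
      _ = β * ∫⁻ t, g t ∂μ := lintegral_smul_measure _ _

theorem ConditionM.exists_eventually_measure_Icc_add_le (hμ_inf : μ univ = ⊤)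
    (hμ_fin : ∀ a b : ℝ, μ (Icc a b) < ⊤) (hM : ConditionM μ) (δ : ℝ) :
    ∃ c : ℝ, ∀ᶠ r in atTop,
      (μ (Icc (-(r + δ)) (r + δ))).toReal ≤ c * (μ (Icc (-r) r)).toReal := by
  have hshift : ∀ τ, ∃ β M : ℝ≥0∞, β ≠ ⊤ ∧ M ≠ ⊤ ∧
      ∀ r, μ (Icc (-r - τ) (r - τ)) ≤ M + β * μ (Icc (-r) r) := fun τ => by
    obtain ⟨β, M, hβ, hM', h⟩ := hM.exists_lintegral_comp_add_le hμ_fin τ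
    refine ⟨β, M, hβ, hM', fun r => ?_⟩
    have hind : ∀ t, (Icc (-r) r).indicator (1 : ℝ → ℝ≥0∞) (t + τ) =
        (Icc (-r - τ) (r - τ)).indicator 1 t := fun t => by
      rw [← preimage_add_const_Icc, ← indicator_comp_right]; rfl
    simpa only [hind, lintegral_indicator_one measurableSet_Icc, one_mul] using
      h ((Icc (-r) r).indicator 1) (measurable_one.indicator measurableSet_Icc) 1
        (indicator_le_self _ _)
  obtain ⟨β₁, M₁, hβ₁, hM₁, h₁⟩ := hshift δ
  obtain ⟨β₂, M₂, hβ₂, hM₂, h₂⟩ := hshift (-δ)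
  refine ⟨(M₁ + β₁ + (M₂ + β₂)).toReal, ?_⟩
  filter_upwards [eventually_ge_atTop δ,
    (tendsto_measure_Icc_neg_atTop hμ_inf).eventually (eventually_ge_nhds ENNReal.one_lt_top)]
    with r hr hone
  set I := Icc (-r) r
  have hcover : Icc (-(r + δ)) (r + δ) ⊆ Icc (-r - δ) (r - δ) ∪ Icc (-r - -δ) (r - -δ) := by
    intro x hx
    rcases le_or_gt x (r - δ) with h | h
    · exact Or.inl ⟨by linarith [hx.1], h⟩
    · exact Or.inr ⟨by linarith, by linarith [hx.2]⟩
  have hle : μ (Icc (-(r + δ)) (r + δ)) ≤ (M₁ + β₁ + (M₂ + β₂)) * μ I :=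
    calc μ (Icc (-(r + δ)) (r + δ))
        ≤ μ (Icc (-r - δ) (r - δ)) + μ (Icc (-r - -δ) (r - -δ)) :=
          (measure_mono hcover).trans (measure_union_le _ _)
      _ ≤ (M₁ + β₁ * μ I) + (M₂ + β₂ * μ I) := add_le_add (h₁ r) (h₂ r)
      _ ≤ (M₁ * μ I + β₁ * μ I) + (M₂ * μ I + β₂ * μ I) := by
          gcongr <;> exact le_mul_of_one_le_right' hone
      _ = (M₁ + β₁ + (M₂ + β₂)) * μ I := by ring
  rw [← ENNReal.toReal_mul]
  exact ENNReal.toReal_mono (ENNReal.mul_ne_top (by finiteness) (hμ_fin _ _).ne) hle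

end MeasureGrowth

section Averages

variable {μ : Measure ℝ} {g : ℝ → ℝ} {C : ℝ}

theorem ConditionM.exists_setIntegral_comp_add_le (hμ_fin : ∀ a b : ℝ, μ (Icc a b) < ⊤)
    (hM : ConditionM μ) (hg : Measurable g) (hg0 : 0 ≤ g) (hgC : ∀ t, g t ≤ C) (a : ℝ) :
    ∃ β M : ℝ, 0 ≤ β ∧ ∀ r, ∫ t in Icc (-r) r, g (t + a) ∂μ ≤
      M + β * ∫ t in Icc (-(r + |a|)) (r + |a|), g t ∂μ := by
  obtain ⟨β, M, hβ, hM', h⟩ := hM.exists_lintegral_comp_add_le hμ_fin a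
  have hC : 0 ≤ C := (hg0 0).trans (hgC 0)
  refine ⟨β.toReal, C * M.toReal, ENNReal.toReal_nonneg, fun r => ?_⟩
  set J := Icc (-(r + |a|)) (r + |a|)
  have hshift : ∀ t ∈ Icc (-r) r, t + a ∈ J := fun t ht =>
    ⟨by linarith [ht.1, neg_abs_le a], by linarith [ht.2, le_abs_self a]⟩
  have hlin : ∫⁻ t in Icc (-r) r, ENNReal.ofReal (g (t + a)) ∂μ ≤
      ENNReal.ofReal C * M + β * ∫⁻ t in J, ENNReal.ofReal (g t) ∂μ :=
    calc ∫⁻ t in Icc (-r) r, ENNReal.ofReal (g (t + a)) ∂μ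
        = ∫⁻ t in Icc (-r) r, J.indicator (fun t => ENNReal.ofReal (g t)) (t + a) ∂μ :=
          setLIntegral_congr_fun measurableSet_Icc fun t ht =>
            (indicator_of_mem (hshift t ht) (fun t => ENNReal.ofReal (g t))).symm
      _ ≤ ∫⁻ t, J.indicator (fun t => ENNReal.ofReal (g t)) (t + a) ∂μ :=
          setLIntegral_le_lintegral _ _
      _ ≤ ENNReal.ofReal C * M + β * ∫⁻ t in J, ENNReal.ofReal (g t) ∂μ := by
          rw [← lintegral_indicator measurableSet_Icc]
          exact h _ (hg.ennreal_ofReal.indicator measurableSet_Icc) _ fun t =>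
            indicator_apply_le (g := fun _ => ENNReal.ofReal C) fun _ =>
              ENNReal.ofReal_le_ofReal (hgC t)
  have hfin : ∫⁻ t in J, ENNReal.ofReal (g t) ∂μ ≠ ⊤ := by
    refine ((lintegral_mono fun t => ENNReal.ofReal_le_ofReal (hgC t)).trans_lt ?_).ne
    rw [setLIntegral_const]
    exact ENNReal.mul_lt_top ENNReal.ofReal_lt_top (hμ_fin _ _)
  rw [integral_eq_lintegral_of_nonneg_ae (ae_of_all _ fun t => hg0 (t + a))
      (hg.comp (measurable_add_const a)).aestronglyMeasurable,
    integral_eq_lintegral_of_nonneg_ae (ae_of_all _ hg0) hg.aestronglyMeasurable]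
  calc (∫⁻ t in Icc (-r) r, ENNReal.ofReal (g (t + a)) ∂μ).toReal
      ≤ (ENNReal.ofReal C * M + β * ∫⁻ t in J, ENNReal.ofReal (g t) ∂μ).toReal :=
        ENNReal.toReal_mono (by finiteness) hlin
    _ = C * M.toReal + β.toReal * (∫⁻ t in J, ENNReal.ofReal (g t) ∂μ).toReal := by
        rw [ENNReal.toReal_add (by finiteness) (by finiteness), ENNReal.toReal_mul,
          ENNReal.toReal_mul, ENNReal.toReal_ofReal hC]

theorem tendsto_centeredAverage_comp_add_right (hμ_inf : μ univ = ⊤)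
    (hμ_fin : ∀ a b : ℝ, μ (Icc a b) < ⊤) (hM : ConditionM μ) (hg : Measurable g) (hg0 : 0 ≤ g)
    (hgC : ∀ t, g t ≤ C) (hlim : Tendsto (centeredAverage μ g) atTop (𝓝 0)) (a : ℝ) :
    Tendsto (centeredAverage μ fun t => g (t + a)) atTop (𝓝 0) := by
  set D := fun r => (μ (Icc (-r) r)).toReal
  have hD : Tendsto D atTop atTop := tendsto_measure_Icc_neg_toReal_atTop hμ_inf hμ_fin
  have hshift : Tendsto (· + |a|) atTop atTop := tendsto_atTop_add_const_right _ _ tendsto_id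
  obtain ⟨β, M, hβ, hN⟩ := hM.exists_setIntegral_comp_add_le hμ_fin hg hg0 hgC a
  obtain ⟨c, hc⟩ := hM.exists_eventually_measure_Icc_add_le hμ_inf hμ_fin |a|
  have hbound :
      Tendsto (fun r => M / D r + β * c * centeredAverage μ g (r + |a|)) atTop (𝓝 0) := by
    simpa using (tendsto_const_nhds.div_atTop hD).add ((hlim.comp hshift).const_mul (β * c))
  refine squeeze_zero' (Eventually.of_forall fun r =>
    div_nonneg (integral_nonneg fun t => hg0 (t + a)) ENNReal.toReal_nonneg) ?_ hbound
  filter_upwards [hc, hD.eventually_gt_atTop 0, hshift.eventually (hD.eventually_gt_atTop 0)]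
    with r hcr hDr hDr'
  set N := ∫ t in Icc (-(r + |a|)) (r + |a|), g t ∂μ
  have hN0 : 0 ≤ N / D (r + |a|) := div_nonneg (integral_nonneg hg0) hDr'.le
  have hratio : N / D r ≤ c * (N / D (r + |a|)) :=
    calc N / D r = N / D (r + |a|) * D (r + |a|) / D r := by field_simp
      _ ≤ N / D (r + |a|) * (c * D r) / D r := by gcongr
      _ = c * (N / D (r + |a|)) := by field_simp
  calc centeredAverage μ (fun t => g (t + a)) r ≤ (M + β * N) / D r :=
        div_le_div_of_nonneg_right (hN r) hDr.le
    _ = M / D r + β * (N / D r) := by ring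
    _ ≤ M / D r + β * (c * (N / D (r + |a|))) := by gcongr
    _ = M / D r + β * c * centeredAverage μ g (r + |a|) := by rw [centeredAverage]; ring

end Averages

theorem stepanovErgodic_translation_invariant_general
    {X : Type*} [NormedAddCommGroup X]
    (p : ℝ) (μ : Measure ℝ)
    (hμ_inf : μ Set.univ = ⊤) (hμ_fin : ∀ a b : ℝ, μ (Set.Icc a b) < ⊤)
    (hM : ConditionM μ)
    (f : ℝ → X) (hf : StepanovErgodic μ p f) (a : ℝ) :
    StepanovErgodic μ p (fun t => f (t + a)) := by
  rw [stepanovErgodic_iff] at hf ⊢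
  obtain ⟨⟨C, hC⟩, hlim⟩ := hf
  have hshift :
      stepanovLocalNorm p (fun t => f (t + a)) = fun t => stepanovLocalNorm p f (t + a) :=
    funext (stepanovLocalNorm_comp_add_right p f a)
  rw [hshift]
  exact ⟨⟨C, fun t => hC (t + a)⟩, tendsto_centeredAverage_comp_add_right hμ_inf hμ_fin hM
    (measurable_stepanovLocalNorm p f) (stepanovLocalNorm_nonneg p f) hC hlim a⟩

/-- If `μ ∈ 𝓜` satisfies condition (M), the space of Stepanov `μ`-ergodic functions of
order `p` is translation invariant. -/
theorem stepanovErgodic_translation_invariant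
    {X : Type*} [NormedAddCommGroup X] [NormedSpace ℝ X] [CompleteSpace X]
    (p : ℝ) (hp : 1 ≤ p) (μ : Measure ℝ)
    (hμ_inf : μ Set.univ = ⊤) (hμ_fin : ∀ a b : ℝ, μ (Set.Icc a b) < ⊤)
    (hM : ConditionM μ)
    (f : ℝ → X) (hf : StepanovErgodic μ p f) (a : ℝ) :
    StepanovErgodic μ p (fun t => f (t + a)) :=
  stepanovErgodic_translation_invariant_general p μ hμ_inf hμ_fin hM f hf a
end

section
/- Let μ ∈ 𝓜 satisfy condition (M) and 1 ≤ p < ∞. Then every μ-ergodic bounded continuous function f : ℝ → X is Stepanov μ-ergodic of order p; that is, 𝓔(ℝ,X,μ) ⊆ 𝓔^p(ℝ,X,μ). -/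
/-!
Boundedness gives `‖f‖ ^ p ≤ M ^ (p - 1) * ‖f‖`, so `‖f‖ ^ p` is μ-ergodic as well. Condition (M)
makes every translate `t ↦ h (t + s)` of a bounded nonnegative μ-ergodic function `h` μ-ergodic:
off a bounded set, translation by `s` changes μ by at most a constant factor, and (M) also gives
`μ [-(r + c), r + c] ≤ C * μ [-r, r]` for large `r`. These constants depend on `s`, so the
μ-ergodicity of `g t = ∫ s in (0, 1], ‖f (t + s)‖ ^ p` is obtained from Fubini and dominated
convergence in `s`. Finally `g ^ (1 / p) ≤ ε + ε ^ (1 - p) * g` for every `ε > 0`.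
-/

open MeasureTheory Set Filter

open Topology

lemma Real.rpow_le_rpow_sub_one_mul {x M p : ℝ} (hx : 0 ≤ x) (hxM : x ≤ M) (hp : 1 ≤ p) :
    x ^ p ≤ M ^ (p - 1) * x := by
  calc x ^ p = x ^ (p - 1) * x := by
        rw [← Real.rpow_add_one' hx (by linarith), sub_add_cancel]
    _ ≤ M ^ (p - 1) * x := by gcongr

lemma Real.rpow_one_div_le_add_mul {x ε p : ℝ} (hx : 0 ≤ x) (hε : 0 < ε) (hp : 1 ≤ p) :
    x ^ (1 / p) ≤ ε + ε ^ (1 - p) * x := by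
  have hp0 : 0 < p := by linarith
  rcases le_or_gt x (ε ^ p) with hxε | hxε
  · have : x ^ (1 / p) ≤ ε := by
      calc x ^ (1 / p) ≤ (ε ^ p) ^ (1 / p) := by gcongr
        _ = ε := by rw [← Real.rpow_mul hε.le, mul_one_div_cancel hp0.ne', Real.rpow_one]
    nlinarith [Real.rpow_nonneg hε.le (1 - p)]
  · have hx0 : 0 < x := (Real.rpow_pos_of_pos hε p).trans hxε
    have : x ^ (1 / p - 1) ≤ ε ^ (1 - p) := by
      calc x ^ (1 / p - 1) ≤ (ε ^ p) ^ (1 / p - 1) :=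
            Real.rpow_le_rpow_of_nonpos (Real.rpow_pos_of_pos hε p) hxε.le
              (by rw [sub_nonpos, div_le_one hp0]; exact hp)
        _ = ε ^ (1 - p) := by
          rw [← Real.rpow_mul hε.le]; congr 1; field_simp
    calc x ^ (1 / p) = x ^ (1 / p - 1) * x := by
          rw [← Real.rpow_add_one hx0.ne', sub_add_cancel]
      _ ≤ ε + ε ^ (1 - p) * x := by nlinarith

noncomputable def symmAverage (μ : Measure ℝ) (h : ℝ → ℝ) (r : ℝ) : ℝ :=
  (∫ t in Icc (-r) r, h t ∂μ) / μ.real (Icc (-r) r)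

section

variable {μ : Measure ℝ}

lemma isLocallyFiniteMeasure_of_measure_Icc_lt_top (hμ : ∀ a b : ℝ, μ (Icc a b) < ⊤) :
    IsLocallyFiniteMeasure μ :=
  ⟨fun x => ⟨Icc (x - 1) (x + 1), Icc_mem_nhds (by linarith) (by linarith), hμ _ _⟩⟩

lemma symmAverage_nonneg {h : ℝ → ℝ} (h0 : 0 ≤ h) (r : ℝ) : 0 ≤ symmAverage μ h r :=
  div_nonneg (integral_nonneg fun t => h0 t) measureReal_nonneg

variable [IsLocallyFiniteMeasure μ]

lemma tendsto_measureReal_Icc_neg_atTop (hμ : μ univ = ⊤) :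
    Tendsto (fun r => μ.real (Icc (-r) r)) atTop atTop := by
  have hmono : Monotone fun r : ℝ => Icc (-r) r := fun r r' h => Icc_subset_Icc (neg_le_neg h) h
  have hU : ⋃ r : ℝ, Icc (-r) r = univ :=
    eq_univ_of_forall fun x => mem_iUnion.2 ⟨|x|, abs_le.1 le_rfl⟩
  have htop : Tendsto (fun r : ℝ => μ (Icc (-r) r)) atTop (𝓝 ⊤) := by
    simpa [Function.comp_def, hU, hμ] using tendsto_measure_iUnion_atTop (μ := μ) hmono
  refine tendsto_atTop.2 fun b => ?_
  filter_upwards [htop.eventually (lt_mem_nhds ENNReal.ofReal_lt_top)] with r hr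
  calc b ≤ (ENNReal.ofReal b).toReal := by rw [ENNReal.toReal_ofReal']; exact le_max_left _ _
    _ ≤ μ.real (Icc (-r) r) := ENNReal.toReal_mono measure_Icc_lt_top.ne hr.le

lemma abs_symmAverage_le {h : ℝ → ℝ} {M : ℝ} (hb : ∀ t, |h t| ≤ M) (r : ℝ) :
    |symmAverage μ h r| ≤ M := by
  rcases eq_or_lt_of_le (measureReal_nonneg : 0 ≤ μ.real (Icc (-r) r)) with hm | hm
  · simpa [symmAverage, ← hm] using (abs_nonneg _).trans (hb 0)
  · rw [symmAverage, abs_div, abs_of_pos hm, div_le_iff₀ hm]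
    exact norm_setIntegral_le_of_norm_le_const measure_Icc_lt_top
      fun t _ => (Real.norm_eq_abs _).trans_le (hb t)

lemma symmAverage_le_add {h g : ℝ → ℝ} (hh : LocallyIntegrable h μ) (hg : LocallyIntegrable g μ)
    {ε C : ℝ} (hle : ∀ t, h t ≤ ε + C * g t) {r : ℝ} (hr : 0 < μ.real (Icc (-r) r)) :
    symmAverage μ h r ≤ ε + C * symmAverage μ g r := by
  have hε : IntegrableOn (fun _ => ε) (Icc (-r) r) μ := integrableOn_const measure_Icc_lt_top.ne
  have hCg : IntegrableOn (fun t => C * g t) (Icc (-r) r) μ :=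
    (hg.integrableOn_isCompact isCompact_Icc).const_mul C
  have hmono : ∫ t in Icc (-r) r, h t ∂μ ≤ ∫ t in Icc (-r) r, (ε + C * g t) ∂μ :=
    setIntegral_mono (hh.integrableOn_isCompact isCompact_Icc) (hε.add hCg) hle
  rw [integral_add hε hCg, setIntegral_const, integral_const_mul, smul_eq_mul] at hmono
  rw [symmAverage, symmAverage, div_le_iff₀ hr, add_mul, mul_assoc, div_mul_cancel₀ _ hr.ne']
  linarith

lemma tendsto_symmAverage_zero_of_le_add (hμ : μ univ = ⊤) {h g : ℝ → ℝ}
    (hh : LocallyIntegrable h μ) (hg : LocallyIntegrable g μ) (h0 : 0 ≤ h)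
    (hle : ∀ ε > 0, ∃ C, ∀ t, h t ≤ ε + C * g t)
    (hg0 : Tendsto (symmAverage μ g) atTop (𝓝 0)) :
    Tendsto (symmAverage μ h) atTop (𝓝 0) := by
  refine tendsto_order.2 ⟨fun a ha => .of_forall fun r => ha.trans_le (symmAverage_nonneg h0 r),
    fun a ha => ?_⟩
  obtain ⟨C, hC⟩ := hle (a / 2) (half_pos ha)
  have hCg : Tendsto (fun r => C * symmAverage μ g r) atTop (𝓝 0) := by
    simpa using hg0.const_mul C
  filter_upwards [hCg.eventually (gt_mem_nhds (half_pos ha)),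
    (tendsto_measureReal_Icc_neg_atTop hμ).eventually_gt_atTop 0] with r hr hm
  linarith [symmAverage_le_add hh hg hC hm]

lemma tendsto_symmAverage_rpow (hμ : μ univ = ⊤) {g : ℝ → ℝ} (hg : Continuous g) (g0 : 0 ≤ g)
    {M : ℝ} (hgM : ∀ t, g t ≤ M) {p : ℝ} (hp : 1 ≤ p)
    (herg : Tendsto (symmAverage μ g) atTop (𝓝 0)) :
    Tendsto (symmAverage μ fun t => g t ^ p) atTop (𝓝 0) :=
  tendsto_symmAverage_zero_of_le_add hμ
    (hg.rpow_const fun _ => Or.inr (by linarith)).locallyIntegrable hg.locallyIntegrable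
    (fun t => Real.rpow_nonneg (g0 t) p) (fun ε hε => ⟨M ^ (p - 1), fun t =>
      (Real.rpow_le_rpow_sub_one_mul (g0 t) (hgM t) hp).trans (le_add_of_nonneg_left hε.le)⟩)
    herg

lemma tendsto_symmAverage_rpow_one_div (hμ : μ univ = ⊤) {g : ℝ → ℝ} (hg : Continuous g)
    (g0 : 0 ≤ g) {p : ℝ} (hp : 1 ≤ p)
    (herg : Tendsto (symmAverage μ g) atTop (𝓝 0)) :
    Tendsto (symmAverage μ fun t => g t ^ (1 / p)) atTop (𝓝 0) :=
  tendsto_symmAverage_zero_of_le_add hμ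
    (hg.rpow_const fun _ => Or.inr (by positivity)).locallyIntegrable hg.locallyIntegrable
    (fun t => Real.rpow_nonneg (g0 t) _)
    (fun ε hε => ⟨ε ^ (1 - p), fun t => Real.rpow_one_div_le_add_mul (g0 t) hε hp⟩) herg

lemma tendsto_symmAverage_integral_comp_add (ν : Measure ℝ) [IsFiniteMeasure ν] {h : ℝ → ℝ}
    (hm : Measurable h) {M : ℝ} (hb : ∀ t, |h t| ≤ M)
    (htr : ∀ s, Tendsto (symmAverage μ fun t => h (t + s)) atTop (𝓝 0)) :
    Tendsto (symmAverage μ fun t => ∫ s, h (t + s) ∂ν) atTop (𝓝 0) := by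
  have hswap : symmAverage μ (fun t => ∫ s, h (t + s) ∂ν) =
      fun r => ∫ s, symmAverage μ (fun t => h (t + s)) r ∂ν := by
    ext r
    have : IsFiniteMeasure (μ.restrict (Icc (-r) r)) :=
      isFiniteMeasure_restrict.2 measure_Icc_lt_top.ne
    rw [symmAverage, integral_integral_swap, ← integral_div]
    · rfl
    exact Integrable.of_bound (hm.comp (measurable_fst.add measurable_snd)).aestronglyMeasurable
      M (ae_of_all _ fun z => (Real.norm_eq_abs _).trans_le (hb _))
  have hmeas : ∀ r, AEStronglyMeasurable (fun s => symmAverage μ (fun t => h (t + s)) r) ν :=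
    fun r => ((hm.comp (measurable_snd.add measurable_fst)).stronglyMeasurable.integral_prod_right'
      (ν := μ.restrict (Icc (-r) r))).measurable.div_const _ |>.aestronglyMeasurable
  simpa [hswap] using tendsto_integral_filter_of_dominated_convergence (fun _ => M)
    (.of_forall hmeas) (.of_forall fun r => ae_of_all _ fun s => (Real.norm_eq_abs _).trans_le
      (abs_symmAverage_le (fun t => hb (t + s)) r)) (integrable_const M) (ae_of_all _ htr)

end

lemma Measurable.integrableOn_of_nonneg_of_le {ν : Measure ℝ} {h : ℝ → ℝ}
    (hm : Measurable h) (h0 : 0 ≤ h) {M : ℝ} (hb : ∀ t, h t ≤ M) {S : Set ℝ} (hS : ν S ≠ ⊤) :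
    IntegrableOn h S ν :=
  Measure.integrableOn_of_bounded hS hm.aestronglyMeasurable
    (ae_of_all _ fun t => (Real.norm_of_nonneg (h0 t)).trans_le (hb t))

lemma setIntegral_comp_add_le_of_map_le {μ ν : Measure ℝ} {s : ℝ} {β : NNReal}
    (hle : ν.map (· + s) ≤ (β : ENNReal) • μ) {h : ℝ → ℝ} (hm : Measurable h)
    (h0 : 0 ≤ h) {M : ℝ} (hb : ∀ t, h t ≤ M) {S T : Set ℝ} (hT : MeasurableSet T)
    (hμT : μ T ≠ ⊤) (hST : S ⊆ (· + s) ⁻¹' T) :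
    ∫ t in S, h (t + s) ∂ν ≤ β * ∫ t in T, h t ∂μ := by
  have hβμT : ((β : ENNReal) • μ) T ≠ ⊤ := by
    rw [Measure.smul_apply, smul_eq_mul]
    exact ENNReal.mul_ne_top ENNReal.coe_ne_top hμT
  have hνT : ν ((· + s) ⁻¹' T) ≠ ⊤ := by
    rw [← Measure.map_apply (measurable_add_const s) hT]
    exact ne_top_of_le_ne_top hβμT (hle T)
  calc ∫ t in S, h (t + s) ∂ν ≤ ∫ t in (· + s) ⁻¹' T, h (t + s) ∂ν :=
        setIntegral_mono_set ((hm.comp (measurable_add_const s)).integrableOn_of_nonneg_of_le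
          (fun t => h0 (t + s)) (fun t => hb (t + s)) hνT)
          (ae_of_all _ fun t => h0 (t + s)) hST.eventuallyLE
    _ = ∫ t in T, h t ∂(ν.map (· + s)) :=
        (setIntegral_map hT hm.aestronglyMeasurable (measurable_add_const s).aemeasurable).symm
    _ ≤ ∫ t in T, h t ∂((β : ENNReal) • μ) :=
        integral_mono_measure (Measure.restrict_mono subset_rfl hle) (ae_of_all _ fun t => h0 t)
          (hm.integrableOn_of_nonneg_of_le h0 hb hβμT)
    _ = β * ∫ t in T, h t ∂μ := by
        rw [Measure.restrict_smul, integral_smul_measure]; rfl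

namespace ConditionM

variable {μ : Measure ℝ}

lemma exists_map_add_restrict_compl_le (hM : ConditionM μ) (s : ℝ) :
    ∃ (β : NNReal) (a b : ℝ), (μ.restrict (Icc a b)ᶜ).map (· + s) ≤ (β : ENNReal) • μ := by
  obtain ⟨β, -, a, b, hP⟩ := hM (-s)
  refine ⟨β.toNNReal, a - s, b - s, Measure.le_iff.2 fun B hB => ?_⟩
  have hBs : MeasurableSet ((· + s) ⁻¹' B) := measurable_add_const s hB
  rw [Measure.map_apply (measurable_add_const s) hB, Measure.restrict_apply hBs,
    Measure.smul_apply, smul_eq_mul]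
  set C := (· + s) ⁻¹' B ∩ (Icc (a - s) (b - s))ᶜ
  have hC : (· + -s) '' ((· + s) '' C) = C := by rw [image_image]; simp
  have hCs : MeasurableSet ((· + s) '' C) := by
    rw [image_add_right]
    exact (hBs.inter measurableSet_Icc.compl).preimage (measurable_add_const _)
  have hdisj : (· + s) '' C ∩ Icc a b = ∅ := by
    refine eq_empty_of_forall_notMem ?_
    rintro _ ⟨⟨x, ⟨-, hx⟩, rfl⟩, hxab⟩
    exact hx ⟨by linarith [hxab.1], by linarith [hxab.2]⟩
  calc μ C = μ ((· + -s) '' ((· + s) '' C)) := by rw [hC]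
    _ ≤ ENNReal.ofReal β * μ ((· + s) '' C) := hP _ hCs hdisj
    _ ≤ β.toNNReal * μ B := by
      gcongr
      · exact le_rfl
      · exact image_subset_iff.2 inter_subset_left

variable [IsLocallyFiniteMeasure μ]

lemma exists_setIntegral_comp_add_le_s7 (hM : ConditionM μ) {h : ℝ → ℝ} (hm : Measurable h)
    (h0 : 0 ≤ h) {M : ℝ} (hb : ∀ t, h t ≤ M) (s : ℝ) :
    ∃ β K : ℝ, 0 ≤ β ∧ ∀ r, ∫ t in Icc (-r) r, h (t + s) ∂μ ≤
      K + β * ∫ t in Icc (-(r + |s|)) (r + |s|), h t ∂μ := by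
  obtain ⟨β, a, b, hle⟩ := hM.exists_map_add_restrict_compl_le s
  have hint : ∀ S, μ S ≠ ⊤ → IntegrableOn (fun t => h (t + s)) S μ := fun S =>
    (hm.comp (measurable_add_const s)).integrableOn_of_nonneg_of_le (fun t => h0 (t + s))
      (fun t => hb (t + s))
  refine ⟨β, M * μ.real (Icc a b), β.2, fun r => ?_⟩
  have hnear : ∫ t in Icc (-r) r ∩ Icc a b, h (t + s) ∂μ ≤ M * μ.real (Icc a b) := by
    calc _ ≤ ∫ t in Icc a b, h (t + s) ∂μ :=
          setIntegral_mono_set (hint _ measure_Icc_lt_top.ne)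
            (ae_of_all _ fun t => h0 (t + s)) inter_subset_right.eventuallyLE
      _ ≤ ∫ t in Icc a b, M ∂μ :=
          setIntegral_mono (hint _ measure_Icc_lt_top.ne)
            (integrableOn_const measure_Icc_lt_top.ne) fun t => hb _
      _ = M * μ.real (Icc a b) := by rw [setIntegral_const, smul_eq_mul, mul_comm]
  have hfar : ∫ t in Icc (-r) r \ Icc a b, h (t + s) ∂μ ≤
      β * ∫ t in Icc (-(r + |s|)) (r + |s|), h t ∂μ := by
    rw [Set.sdiff_eq, ← Measure.restrict_restrict measurableSet_Icc]
    exact setIntegral_comp_add_le_of_map_le hle hm h0 hb measurableSet_Icc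
      measure_Icc_lt_top.ne fun t ht =>
        ⟨by linarith [ht.1, neg_abs_le s], by linarith [ht.2, le_abs_self s]⟩
  rw [← integral_inter_add_sdiff measurableSet_Icc (hint _ measure_Icc_lt_top.ne)]
  exact add_le_add hnear hfar

lemma exists_measureReal_Icc_add_le (hM : ConditionM μ) (τ : ℝ) :
    ∃ β a b : ℝ, 0 ≤ β ∧ ∀ x y, Icc x y ∩ Icc a b = ∅ →
      μ.real (Icc (x + τ) (y + τ)) ≤ β * μ.real (Icc x y) := by
  obtain ⟨β, hβ, a, b, hP⟩ := hM τ
  refine ⟨β, a, b, hβ.le, fun x y hxy => ?_⟩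
  rw [← image_add_const_Icc, measureReal_def, measureReal_def, ← ENNReal.toReal_ofReal hβ.le,
    ← ENNReal.toReal_mul]
  exact ENNReal.toReal_mono (ENNReal.mul_ne_top ENNReal.ofReal_ne_top measure_Icc_lt_top.ne)
    (hP _ measurableSet_Icc hxy)

lemma exists_measureReal_Icc_add_le_mul (hM : ConditionM μ) {c : ℝ} (hc : 0 ≤ c) :
    ∃ C : ℝ, ∀ᶠ r in atTop, μ.real (Icc (-(r + c)) (r + c)) ≤ C * μ.real (Icc (-r) r) := by
  obtain ⟨β₁, a₁, b₁, hβ₁, hP₁⟩ := hM.exists_measureReal_Icc_add_le c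
  obtain ⟨β₂, a₂, b₂, hβ₂, hP₂⟩ := hM.exists_measureReal_Icc_add_le (-c)
  refine ⟨1 + β₁ + β₂, ?_⟩
  filter_upwards [eventually_ge_atTop c, eventually_gt_atTop (b₁ + c),
    eventually_gt_atTop (c - a₂)] with r hrc hr₁ hr₂
  have hsub : Icc (-(r + c)) (r + c) ⊆
      Icc (-r) r ∪ Icc (r - c + c) (r + c) ∪ Icc (-r + -c) (-r + c + -c) := by
    intro x ⟨hx₁, hx₂⟩
    rcases le_or_gt x r with h₁ | h₁
    · rcases le_or_gt (-r) x with h₂ | h₂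
      · exact .inl (.inl ⟨h₂, h₁⟩)
      · exact .inr ⟨by linarith, by linarith⟩
    · exact .inl (.inr ⟨by linarith, by linarith⟩)
  have hright : μ.real (Icc (r - c + c) (r + c)) ≤ β₁ * μ.real (Icc (-r) r) := by
    have hdisj : Icc (r - c) r ∩ Icc a₁ b₁ = ∅ :=
      eq_empty_of_forall_notMem fun x hx => by linarith [hx.1.1, hx.2.2]
    refine (hP₁ _ _ hdisj).trans ?_
    gcongr
    · exact measure_Icc_lt_top.ne
    · linarith
  have hleft : μ.real (Icc (-r + -c) (-r + c + -c)) ≤ β₂ * μ.real (Icc (-r) r) := by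
    have hdisj : Icc (-r) (-r + c) ∩ Icc a₂ b₂ = ∅ :=
      eq_empty_of_forall_notMem fun x hx => by linarith [hx.1.2, hx.2.1]
    refine (hP₂ _ _ hdisj).trans ?_
    gcongr
    · exact measure_Icc_lt_top.ne
    · linarith
  calc μ.real (Icc (-(r + c)) (r + c))
      ≤ μ.real (Icc (-r) r ∪ Icc (r - c + c) (r + c) ∪ Icc (-r + -c) (-r + c + -c)) :=
        measureReal_mono hsub (measure_union_lt_top
          (measure_union_lt_top measure_Icc_lt_top measure_Icc_lt_top) measure_Icc_lt_top).ne
    _ ≤ μ.real (Icc (-r) r) + μ.real (Icc (r - c + c) (r + c)) +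
        μ.real (Icc (-r + -c) (-r + c + -c)) :=
        (measureReal_union_le _ _).trans (by gcongr; exact measureReal_union_le _ _)
    _ ≤ (1 + β₁ + β₂) * μ.real (Icc (-r) r) := by linarith

lemma tendsto_symmAverage_comp_add (hM : ConditionM μ) (hμ : μ univ = ⊤) {h : ℝ → ℝ}
    (hm : Measurable h) (h0 : 0 ≤ h) {M : ℝ} (hb : ∀ t, h t ≤ M)
    (herg : Tendsto (symmAverage μ h) atTop (𝓝 0)) (s : ℝ) :
    Tendsto (symmAverage μ fun t => h (t + s)) atTop (𝓝 0) := by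
  obtain ⟨β, K, hβ, hest⟩ := hM.exists_setIntegral_comp_add_le_s7 hm h0 hb s
  obtain ⟨C, hC⟩ := hM.exists_measureReal_Icc_add_le_mul (abs_nonneg s)
  have hμr := tendsto_measureReal_Icc_neg_atTop hμ
  have hupper : Tendsto (fun r => K / μ.real (Icc (-r) r) +
      β * C * symmAverage μ h (r + |s|)) atTop (𝓝 0) := by
    simpa using (tendsto_const_nhds.div_atTop hμr).add
      ((herg.comp (tendsto_atTop_add_const_right _ _ tendsto_id)).const_mul (β * C))
  refine squeeze_zero' (.of_forall (symmAverage_nonneg fun t => h0 (t + s))) ?_ hupper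
  filter_upwards [hC, hμr.eventually_gt_atTop 0] with r hCr hr
  have hr' : 0 < μ.real (Icc (-(r + |s|)) (r + |s|)) :=
    hr.trans_le (measureReal_mono (Icc_subset_Icc (by linarith [abs_nonneg s])
      (by linarith [abs_nonneg s])) measure_Icc_lt_top.ne)
  have hfar : ∫ t in Icc (-(r + |s|)) (r + |s|), h t ∂μ ≤
      C * μ.real (Icc (-r) r) * symmAverage μ h (r + |s|) := by
    rw [symmAverage, mul_div_assoc', le_div_iff₀ hr']
    nlinarith [integral_nonneg (μ := μ.restrict (Icc (-(r + |s|)) (r + |s|))) fun t => h0 t]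
  rw [symmAverage, div_le_iff₀ hr, add_mul, div_mul_cancel₀ _ hr.ne']
  nlinarith [hest r, mul_le_mul_of_nonneg_left hfar hβ]

end ConditionM

theorem ergodic_subset_stepanovErgodic_general
    {X : Type*} [NormedAddCommGroup X]
    (p : ℝ) (hp : 1 ≤ p) (μ : Measure ℝ)
    (hμ_inf : μ Set.univ = ⊤) (hμ_fin : ∀ a b : ℝ, μ (Set.Icc a b) < ⊤)
    (hM : ConditionM μ)
    (f : ℝ → X) (hcont : Continuous f) (hbdd : ∃ M, ∀ t : ℝ, ‖f t‖ ≤ M)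
    (herg : Tendsto (fun r : ℝ =>
        (∫ t in Set.Icc (-r) r, ‖f t‖ ∂μ) / (μ (Set.Icc (-r) r)).toReal)
      atTop (nhds 0)) :
    Tendsto (fun r : ℝ =>
        (∫ t in Set.Icc (-r) r, (∫ s in Set.Ioc t (t + 1), ‖f s‖ ^ p) ^ (1 / p) ∂μ) /
          (μ (Set.Icc (-r) r)).toReal)
      atTop (nhds 0) := by
  have := isLocallyFiniteMeasure_of_measure_Icc_lt_top hμ_fin
  obtain ⟨M, hfM⟩ := hbdd
  have hp0 : 0 < p := by linarith
  set h : ℝ → ℝ := fun t => ‖f t‖ ^ p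
  have h_cont : Continuous h := hcont.norm.rpow_const fun _ => Or.inr hp0.le
  have h0 : 0 ≤ h := fun t => Real.rpow_nonneg (norm_nonneg _) p
  have hhM : ∀ t, h t ≤ M ^ p := fun t => Real.rpow_le_rpow (norm_nonneg _) (hfM t) hp0.le
  have h_erg : Tendsto (symmAverage μ h) atTop (𝓝 0) :=
    tendsto_symmAverage_rpow hμ_inf hcont.norm (fun t => norm_nonneg _) hfM hp herg
  set g : ℝ → ℝ := fun t => ∫ s in (0 : ℝ)..1, h (t + s)
  have g_cont : Continuous g :=
    intervalIntegral.continuous_parametric_intervalIntegral_of_continuous'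
      (f := fun t s => h (t + s)) (h_cont.comp (continuous_fst.add continuous_snd)) 0 1
  have g_erg : Tendsto (symmAverage μ g) atTop (𝓝 0) := by
    simpa only [g, intervalIntegral.integral_of_le zero_le_one] using
      tendsto_symmAverage_integral_comp_add (volume.restrict (Ioc 0 1)) h_cont.measurable
        (fun t => (abs_of_nonneg (h0 t)).trans_le (hhM t))
        (hM.tendsto_symmAverage_comp_add hμ_inf h_cont.measurable h0 hhM h_erg)
  have hg : ∀ t, ∫ s in Ioc t (t + 1), h s = g t := fun t => by
    simp [g, intervalIntegral.integral_of_le (by linarith : t ≤ t + 1)]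
  simp_rw [hg]
  exact tendsto_symmAverage_rpow_one_div hμ_inf g_cont
    (fun t => intervalIntegral.integral_nonneg zero_le_one fun s _ => h0 _) hp g_erg

/-- Every bounded continuous `μ`-ergodic function is Stepanov `μ`-ergodic of order `p`:
`𝓔(ℝ,X,μ) ⊆ 𝓔^p(ℝ,X,μ)`. -/
theorem ergodic_subset_stepanovErgodic
    {X : Type*} [NormedAddCommGroup X] [NormedSpace ℝ X] [CompleteSpace X]
    (p : ℝ) (hp : 1 ≤ p) (μ : Measure ℝ)
    (hμ_inf : μ Set.univ = ⊤) (hμ_fin : ∀ a b : ℝ, μ (Set.Icc a b) < ⊤)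
    (hM : ConditionM μ)
    (f : ℝ → X) (hcont : Continuous f) (hbdd : ∃ M, ∀ t : ℝ, ‖f t‖ ≤ M)
    (herg : Tendsto (fun r : ℝ =>
        (∫ t in Set.Icc (-r) r, ‖f t‖ ∂μ) / (μ (Set.Icc (-r) r)).toReal)
      atTop (nhds 0)) :
    Tendsto (fun r : ℝ =>
        (∫ t in Set.Icc (-r) r, (∫ s in Set.Ioc t (t + 1), ‖f s‖ ^ p) ^ (1 / p) ∂μ) /
          (μ (Set.Icc (-r) r)).toReal)
      atTop (nhds 0) :=
  ergodic_subset_stepanovErgodic_general p hp μ hμ_inf hμ_fin hM f hcont hbdd herg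
end

section
/- Let μ ∈ 𝓜 and f : ℝ → X bounded continuous. Then f is μ-ergodic if and only if for every ε > 0, lim_{r→∞} μ({t ∈ [−r,r] : ‖f(t)‖ ≥ ε}) / μ([−r,r]) = 0. -/
/-!
Fix `ε > 0` and write `S_ε = {ε ≤ ‖f‖}`. Markov's inequality bounds the relative measure of
`S_ε ∩ [-r, r]` by `ε⁻¹` times the average of `‖f‖` over `[-r, r]`. Conversely, splitting the
integral along `S_ε` and using `‖f‖ ≤ M` bounds that average by `M` times the relative measure
of `S_ε ∩ [-r, r]` plus `ε`. Both bounds hold for every `r`, even when `μ [-r, r] = 0`,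
because division by zero returns `0`.
-/

open MeasureTheory Set Filter

section Superlevel

variable {α : Type*} [MeasurableSpace α] {ν : Measure α} {g : α → ℝ} {M ε : ℝ}

theorem measureReal_superlevel_div_le_inv_mul_average (hg0 : 0 ≤ g) (hgi : Integrable g ν)
    (hε : 0 < ε) :
    ν.real {x | ε ≤ g x} / ν.real univ ≤ ε⁻¹ * ⨍ x, g x ∂ν := by
  calc ν.real {x | ε ≤ g x} / ν.real univ ≤ (ε⁻¹ * ∫ x, g x ∂ν) / ν.real univ := by
        gcongr
        rw [le_inv_mul_iff₀ hε]
        exact mul_meas_ge_le_integral_of_nonneg (ae_of_all _ hg0) hgi ε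
    _ = ε⁻¹ * ⨍ x, g x ∂ν := by rw [average_eq, smul_eq_mul]; ring

variable [IsFiniteMeasure ν]

theorem integrable_of_nonneg_of_le (hg : Measurable g) (hg0 : 0 ≤ g) (hgM : ∀ x, g x ≤ M) :
    Integrable g ν :=
  .of_bound hg.aestronglyMeasurable M (ae_of_all _ fun x => by
    simpa only [Real.norm_eq_abs, abs_of_nonneg (hg0 x)] using hgM x)

theorem integral_le_mul_measureReal_superlevel_add (hg : Measurable g) (hg0 : 0 ≤ g)
    (hgM : ∀ x, g x ≤ M) (hε : 0 ≤ ε) :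
    ∫ x, g x ∂ν ≤ M * ν.real {x | ε ≤ g x} + ε * ν.real univ := by
  set S := {x | ε ≤ g x}
  have hS : MeasurableSet S := measurableSet_le measurable_const hg
  have hgi : Integrable g ν := integrable_of_nonneg_of_le hg hg0 hgM
  have h_on : ∫ x in S, g x ∂ν ≤ M * ν.real S := by
    simpa [mul_comm] using setIntegral_mono_on hgi.integrableOn
      (integrable_const M).integrableOn hS fun x _ => hgM x
  have h_off : ∫ x in Sᶜ, g x ∂ν ≤ ε * ν.real univ := calc
    ∫ x in Sᶜ, g x ∂ν ≤ ∫ _ in Sᶜ, ε ∂ν :=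
      setIntegral_mono_on hgi.integrableOn (integrable_const ε).integrableOn hS.compl
        fun x (hx : ¬ε ≤ g x) => (not_le.1 hx).le
    _ = ε * ν.real Sᶜ := by simp [mul_comm]
    _ ≤ ε * ν.real univ := mul_le_mul_of_nonneg_left (measureReal_mono (subset_univ _)) hε
  rw [← integral_add_compl hS hgi]
  exact add_le_add h_on h_off

theorem average_le_mul_measureReal_superlevel_div_add (hg : Measurable g) (hg0 : 0 ≤ g)
    (hgM : ∀ x, g x ≤ M) (hε : 0 ≤ ε) :
    ⨍ x, g x ∂ν ≤ M * (ν.real {x | ε ≤ g x} / ν.real univ) + ε := by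
  rw [average_eq, smul_eq_mul, inv_mul_eq_div]
  rcases (measureReal_nonneg : 0 ≤ ν.real univ).eq_or_lt with hν | hν
  · simpa [← hν] using hε
  · rw [div_le_iff₀ hν, add_mul, mul_assoc, div_mul_cancel₀ _ hν.ne']
    exact integral_le_mul_measureReal_superlevel_add hg hg0 hgM hε

end Superlevel

theorem tendsto_average_zero_iff_tendsto_measureReal_superlevel_div {α ι : Type*}
    [MeasurableSpace α] {l : Filter ι} (ν : ι → Measure α) [∀ i, IsFiniteMeasure (ν i)]
    {g : α → ℝ} {M : ℝ} (hg : Measurable g) (hg0 : 0 ≤ g) (hgM : ∀ x, g x ≤ M) :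
    Tendsto (fun i => ⨍ x, g x ∂ν i) l (nhds 0) ↔
      ∀ ε > 0, Tendsto (fun i => (ν i).real {x | ε ≤ g x} / (ν i).real univ) l (nhds 0) := by
  constructor
  · intro h ε hε
    refine squeeze_zero (fun i => by positivity)
      (fun i => measureReal_superlevel_div_le_inv_mul_average hg0
        (integrable_of_nonneg_of_le hg hg0 hgM) hε) ?_
    simpa using h.const_mul ε⁻¹
  · intro h
    refine tendsto_order.2 ⟨fun a ha => .of_forall fun i => ha.trans_le ?_, fun δ hδ => ?_⟩
    · rw [average_eq]
      exact smul_nonneg (by positivity) (integral_nonneg hg0)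
    · have hsmall : ∀ᶠ i in l, M * ((ν i).real {x | δ / 2 ≤ g x} / (ν i).real univ) < δ / 2 :=
        ((h _ (half_pos hδ)).const_mul M).eventually (gt_mem_nhds (by simpa using half_pos hδ))
      filter_upwards [hsmall] with i hi
      calc ⨍ x, g x ∂ν i
          ≤ M * ((ν i).real {x | δ / 2 ≤ g x} / (ν i).real univ) + δ / 2 :=
            average_le_mul_measureReal_superlevel_div_add hg hg0 hgM (half_pos hδ).le
        _ < δ := by linarith

theorem ergodic_iff_measure_superlevel_general
    {X : Type*} [NormedAddCommGroup X]
    (μ : Measure ℝ)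
    (hμ_fin : ∀ a b : ℝ, μ (Set.Icc a b) < ⊤)
    (f : ℝ → X) (hcont : Continuous f) (hbdd : ∃ M, ∀ t : ℝ, ‖f t‖ ≤ M) :
    Tendsto (fun r : ℝ =>
        (∫ t in Set.Icc (-r) r, ‖f t‖ ∂μ) / (μ (Set.Icc (-r) r)).toReal)
      atTop (nhds 0) ↔
    ∀ ε : ℝ, 0 < ε →
      Tendsto (fun r : ℝ =>
          (μ {t ∈ Set.Icc (-r) r | ε ≤ ‖f t‖}).toReal / (μ (Set.Icc (-r) r)).toReal)
        atTop (nhds 0) := by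
  obtain ⟨M, hM⟩ := hbdd
  have (r : ℝ) : IsFiniteMeasure (μ.restrict (Icc (-r) r)) :=
    isFiniteMeasure_restrict.2 (hμ_fin _ _).ne
  have hnorm : Measurable fun t => ‖f t‖ := hcont.norm.measurable
  have key := tendsto_average_zero_iff_tendsto_measureReal_superlevel_div (l := atTop)
    (fun r => μ.restrict (Icc (-r) r)) hnorm (fun t => norm_nonneg (f t)) hM
  simp only [average_eq, smul_eq_mul, inv_mul_eq_div, measureReal_def, Measure.restrict_apply_univ,
    Measure.restrict_apply (measurableSet_le measurable_const hnorm), inter_comm _ (Icc _ _)] at key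
  exact key

/-- A bounded continuous function `f` is `μ`-ergodic if and only if for every `ε > 0`
the relative `μ`-measure of `{t ∈ [-r,r] : ‖f t‖ ≥ ε}` tends to `0` as `r → ∞`. -/
theorem ergodic_iff_measure_superlevel
    {X : Type*} [NormedAddCommGroup X] [NormedSpace ℝ X] [CompleteSpace X]
    (μ : Measure ℝ)
    (hμ_inf : μ Set.univ = ⊤) (hμ_fin : ∀ a b : ℝ, μ (Set.Icc a b) < ⊤)
    (f : ℝ → X) (hcont : Continuous f) (hbdd : ∃ M, ∀ t : ℝ, ‖f t‖ ≤ M) :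
    Tendsto (fun r : ℝ =>
        (∫ t in Set.Icc (-r) r, ‖f t‖ ∂μ) / (μ (Set.Icc (-r) r)).toReal)
      atTop (nhds 0) ↔
    ∀ ε : ℝ, 0 < ε →
      Tendsto (fun r : ℝ =>
          (μ {t ∈ Set.Icc (-r) r | ε ≤ ‖f t‖}).toReal / (μ (Set.Icc (-r) r)).toReal)
        atTop (nhds 0) :=
  ergodic_iff_measure_superlevel_general μ hμ_fin f hcont hbdd
end

section
/- Suppose (X,d) is a complete metric space and T : X → X satisfies: for each ε > 0 there exists δ > 0 such that for all x, y ∈ X, ε ≤ d(x,y) ≤ ε + δ implies d(Tx,Ty) < ε. Then T has a unique fixed point ξ, and for every x ∈ X the iterates Tⁿx converge to ξ. -/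
open Filter Topology Function

/-- Meir and Keeler's weakly uniformly strict contraction. -/
def IsMeirKeeler {X : Type*} [PseudoMetricSpace X] (T : X → X) : Prop :=
  ∀ ε : ℝ, 0 < ε → ∃ δ : ℝ, 0 < δ ∧ ∀ x y : X,
    ε ≤ dist x y → dist x y ≤ ε + δ → dist (T x) (T y) < ε

namespace IsMeirKeeler

variable {X : Type*} [MetricSpace X] {T : X → X}

theorem dist_lt (hT : IsMeirKeeler T) {x y : X} (h : x ≠ y) :
    dist (T x) (T y) < dist x y := by
  obtain ⟨δ, hδ, hδT⟩ := hT (dist x y) (dist_pos.2 h)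
  exact hδT x y le_rfl (by linarith)

theorem dist_le (hT : IsMeirKeeler T) (x y : X) : dist (T x) (T y) ≤ dist x y := by
  rcases eq_or_ne x y with rfl | h
  · simp
  · exact (hT.dist_lt h).le

theorem lipschitzWith_one (hT : IsMeirKeeler T) : LipschitzWith 1 T :=
  LipschitzWith.of_dist_le_mul fun x y => by simpa using hT.dist_le x y

theorem eq_of_isFixedPt (hT : IsMeirKeeler T) {x y : X} (hx : IsFixedPt T x)
    (hy : IsFixedPt T y) : x = y := by
  by_contra h
  have := hT.dist_lt h
  rw [hx.eq, hy.eq] at this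
  exact lt_irrefl _ this

/-- The step lengths of an orbit decrease to some `L`; were `L > 0`, the Meir–Keeler condition
at `ε = L` would push a step below `L`. -/
theorem tendsto_dist_iterate_succ (hT : IsMeirKeeler T) (x : X) :
    Tendsto (fun n => dist (T^[n] x) (T^[n + 1] x)) atTop (𝓝 0) := by
  set a : ℕ → ℝ := fun n => dist (T^[n] x) (T^[n + 1] x)
  have ha_succ (n : ℕ) : a (n + 1) = dist (T (T^[n] x)) (T (T^[n + 1] x)) := by
    simp only [a, iterate_succ_apply']
  have ha_anti : Antitone a :=
    antitone_nat_of_succ_le fun n => (ha_succ n).trans_le (hT.dist_le _ _)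
  have ha_bdd : BddBelow (Set.range a) := ⟨0, by rintro _ ⟨n, rfl⟩; exact dist_nonneg⟩
  set L := ⨅ n, a n
  have hL_le (n : ℕ) : L ≤ a n := ciInf_le ha_bdd n
  have ha_lim : Tendsto a atTop (𝓝 L) := tendsto_atTop_ciInf ha_anti ha_bdd
  suffices hL : 0 = L by rwa [← hL] at ha_lim
  have hL_nonneg : 0 ≤ L := le_ciInf fun _ => dist_nonneg
  refine hL_nonneg.eq_or_lt.resolve_right fun hL_pos => ?_
  obtain ⟨δ, hδ, hδT⟩ := hT L hL_pos
  obtain ⟨n, hn⟩ := (ha_lim.eventually (gt_mem_nhds (lt_add_of_pos_right L hδ))).exists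
  have h_succ : a (n + 1) < L := (ha_succ n).trans_lt (hδT _ _ (hL_le n) hn.le)
  exact (hL_le (n + 1)).not_gt h_succ

/-- Once a step `dist x (T x)` is shorter than the `δ` belonging to `ε`, the whole orbit stays
within `ε + δ` of `x`: inductively, `dist (T x) (T^[k+1] x) < ε`, either by non-expansiveness
or by the Meir–Keeler condition. -/
theorem dist_iterate_lt {ε δ : ℝ} (hT : IsMeirKeeler T) (hε : 0 ≤ ε)
    (hδT : ∀ x y : X, ε ≤ dist x y → dist x y ≤ ε + δ → dist (T x) (T y) < ε)
    {x : X} (hx : dist x (T x) < δ) (k : ℕ) : dist x (T^[k] x) < ε + δ := by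
  induction k with
  | zero => simpa using add_pos_of_nonneg_of_pos hε (dist_nonneg.trans_lt hx)
  | succ k ih =>
    have h_tail : dist (T x) (T (T^[k] x)) < ε := by
      rcases lt_or_ge (dist x (T^[k] x)) ε with h | h
      · exact (hT.dist_le _ _).trans_lt h
      · exact hδT _ _ h ih.le
    calc dist x (T^[k + 1] x)
        ≤ dist x (T x) + dist (T x) (T (T^[k] x)) := by
          rw [iterate_succ_apply']; exact dist_triangle _ _ _
      _ < δ + ε := add_lt_add hx h_tail
      _ = ε + δ := add_comm δ ε

theorem cauchySeq_iterate (hT : IsMeirKeeler T) (x : X) : CauchySeq fun n => T^[n] x := by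
  refine Metric.cauchySeq_iff'.2 fun ε hε => ?_
  obtain ⟨δ, hδ, hδT⟩ := hT (ε / 2) (half_pos hε)
  set η := min δ (ε / 2)
  have hηT (y z : X) (h₁ : ε / 2 ≤ dist y z) (h₂ : dist y z ≤ ε / 2 + η) :
      dist (T y) (T z) < ε / 2 :=
    hδT y z h₁ (h₂.trans (add_le_add_right (min_le_left _ _) _))
  obtain ⟨N, hN⟩ := ((hT.tendsto_dist_iterate_succ x).eventually
    (gt_mem_nhds (lt_min hδ (half_pos hε)))).exists
  refine ⟨N, fun n hn => ?_⟩
  obtain ⟨k, rfl⟩ := Nat.exists_eq_add_of_le hn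
  rw [add_comm, iterate_add_apply, dist_comm]
  calc dist (T^[N] x) (T^[k] (T^[N] x))
      < ε / 2 + η := by
        refine hT.dist_iterate_lt (half_pos hε).le hηT ?_ k
        rwa [← iterate_succ_apply' T N x]
    _ ≤ ε := by linarith [min_le_right δ (ε / 2)]

theorem tendsto_iterate_isFixedPt [CompleteSpace X] (hT : IsMeirKeeler T) (x : X) :
    ∃ ξ, IsFixedPt T ξ ∧ Tendsto (fun n => T^[n] x) atTop (𝓝 ξ) := by
  obtain ⟨ξ, hξ⟩ := cauchySeq_tendsto_of_complete (hT.cauchySeq_iterate x)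
  exact ⟨ξ, isFixedPt_of_tendsto_iterate hξ hT.lipschitzWith_one.continuous.continuousAt, hξ⟩

end IsMeirKeeler

/-- Meir–Keeler fixed point theorem: if `(X, d)` is a complete metric space and
`T : X → X` satisfies: for each `ε > 0` there is `δ > 0` such that
`ε ≤ d x y ≤ ε + δ` implies `d (T x) (T y) < ε`, then `T` has a unique fixed point `ξ`
and `T^[n] x → ξ` for every `x`. -/
theorem meir_keeler_fixed_point
    {X : Type*} [MetricSpace X] [CompleteSpace X] [Nonempty X]
    (T : X → X)
    (hT : ∀ ε : ℝ, 0 < ε → ∃ δ : ℝ, 0 < δ ∧ ∀ x y : X,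
      ε ≤ dist x y → dist x y ≤ ε + δ → dist (T x) (T y) < ε) :
    ∃ ξ : X, T ξ = ξ ∧ (∀ ζ : X, T ζ = ζ → ζ = ξ) ∧
      ∀ x : X, Tendsto (fun n : ℕ => T^[n] x) atTop (nhds ξ) := by
  have hMK : IsMeirKeeler T := hT
  obtain ⟨x₀⟩ := ‹Nonempty X›
  obtain ⟨ξ, hξ, -⟩ := hMK.tendsto_iterate_isFixedPt x₀
  refine ⟨ξ, hξ, fun ζ hζ => hMK.eq_of_isFixedPt hζ hξ, fun x => ?_⟩
  obtain ⟨ζ, hζ, hx⟩ := hMK.tendsto_iterate_isFixedPt x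
  rwa [hMK.eq_of_isFixedPt hζ hξ] at hx
end

section
/- Let Ω ⊆ ℝⁿ be a bounded open set, X = L²(Ω), K : ℝ → (0,∞) with ‖K‖_{BS²}‖Q‖_{L²} ≥ 1, Q ∈ L²(Ω) nonnegative, and define f(t,φ)(x) = K(t)·(‖φ‖/(1+‖φ‖))·Q(x) + H(t,x) for some H ≥ 0. Then f satisfies the Meir–Keeler-type condition: for every ε > 0 there exists δ > 0 (e.g. δ = ε²) such that for all φ₁, φ₂ ∈ X with ε ≤ ‖φ₁ − φ₂‖ < ε + δ, one has sup_{t ∈ ℝ}(∫_t^{t+1}‖f(s,φ₁) − f(s,φ₂)‖² ds)^{1/2} < ‖K‖_{BS²}‖Q‖ ε; but f is not a uniformly strict contraction in its second variable with respect to the BS²-norm. -/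
/-!
With `g r = r / (1 + r)` we have `f t φ₁ - f t φ₂ = K t (g ‖φ₁‖ - g ‖φ₂‖) Q`, and
`|g ‖φ₁‖ - g ‖φ₂‖| ≤ g ‖φ₁ - φ₂‖`; so the BS² distance of `f · φ₁` and `f · φ₂` is at most
`‖K‖_{BS²} ‖Q‖ g ‖φ₁ - φ₂‖`, and `g d < ε` as soon as `d < ε + ε²`.
Conversely `g` has slope `1` at `0`, so testing a Lipschitz bound `L` on `φ₂ = 0` and small `φ₁`
gives `|K t| ‖Q‖ ≤ L` for every `t`, hence `‖K‖_{BS²} ‖Q‖ ≤ L`, which rules out `L < 1`.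
-/

open MeasureTheory Set Filter Topology

lemma abs_div_one_add_sub_div_one_add_le {a b d : ℝ} (ha : 0 ≤ a) (hb : 0 ≤ b)
    (hab : |a - b| ≤ d) (hd : d ≤ a + b) :
    |a / (1 + a) - b / (1 + b)| ≤ d / (1 + d) := by
  have hd0 : 0 ≤ d := (abs_nonneg _).trans hab
  have hsub : a / (1 + a) - b / (1 + b) = (a - b) / ((1 + a) * (1 + b)) := by
    field_simp; ring
  have hpos : 0 < (1 + a) * (1 + b) := by positivity
  rw [hsub, abs_div, abs_of_pos hpos, div_le_div_iff₀ hpos (by positivity)]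
  nlinarith [mul_nonneg hd0 (mul_nonneg ha hb), mul_le_mul_of_nonneg_left hd hd0,
    mul_le_mul_of_nonneg_right hab hd0]

lemma abs_norm_div_one_add_norm_sub_le {E : Type*} [SeminormedAddCommGroup E] (x y : E) :
    |‖x‖ / (1 + ‖x‖) - ‖y‖ / (1 + ‖y‖)| ≤ ‖x - y‖ / (1 + ‖x - y‖) :=
  abs_div_one_add_sub_div_one_add_le (norm_nonneg x) (norm_nonneg y)
    (abs_norm_sub_norm_le x y) (norm_sub_le x y)

lemma div_one_add_lt_of_lt_add_sq {d ε : ℝ} (hd : 0 ≤ d) (hε : 0 < ε) (h : d < ε + ε ^ 2) :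
    d / (1 + d) < ε := by
  rw [div_lt_iff₀ (by positivity)]
  rcases lt_or_ge d ε with hdε | hdε
  · nlinarith
  · nlinarith

lemma le_of_forall_pos_mul_div_one_add_le {c L : ℝ} (h : ∀ r > 0, c * (r / (1 + r)) ≤ L * r) :
    c ≤ L := by
  have hlim : Tendsto (fun r : ℝ => c / (1 + r)) (𝓝[>] 0) (𝓝 c) := by
    have : ContinuousAt (fun r : ℝ => c / (1 + r)) 0 :=
      continuousAt_const.div (continuousAt_const.add continuousAt_id) (by norm_num)
    simpa using this.tendsto.mono_left nhdsWithin_le_nhds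
  refine le_of_tendsto hlim (eventually_nhdsWithin_of_forall fun r (hr : 0 < r) => ?_)
  have := h r hr
  rw [mul_div_assoc', div_le_iff₀ (by positivity)] at this
  rw [div_le_iff₀ (by positivity)]
  nlinarith

lemma rpow_half_integral_mul_const_sq {α : Type*} [MeasurableSpace α] (μ : Measure α)
    (g : α → ℝ) (c : ℝ) :
    (∫ x, (g x * c) ^ 2 ∂μ) ^ ((1 : ℝ) / 2) = (∫ x, g x ^ 2 ∂μ) ^ ((1 : ℝ) / 2) * |c| := by
  simp_rw [mul_pow, integral_mul_const]
  rw [Real.mul_rpow (integral_nonneg fun _ => sq_nonneg _) (sq_nonneg c),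
    ← Real.sqrt_eq_rpow (c ^ 2), Real.sqrt_sq_eq_abs]

lemma rpow_half_integral_Ioc_sq_le {g : ℝ → ℝ} {C : ℝ} (hC : ∀ s, |g s| ≤ C) (t : ℝ) :
    (∫ s in Ioc t (t + 1), g s ^ 2) ^ ((1 : ℝ) / 2) ≤ C := by
  have hC0 : 0 ≤ C := (abs_nonneg _).trans (hC t)
  have hint : ∫ s in Ioc t (t + 1), g s ^ 2 ≤ C ^ 2 := by
    have := norm_setIntegral_le_of_norm_le_const (μ := volume) (f := fun s => g s ^ 2)
      (s := Ioc t (t + 1)) (C := C ^ 2) measure_Ioc_lt_top fun s _ => by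
        rw [Real.norm_eq_abs, abs_pow]; exact pow_le_pow_left₀ (abs_nonneg _) (hC s) 2
    simpa [Real.volume_real_Ioc] using (le_abs_self _).trans this
  calc (∫ s in Ioc t (t + 1), g s ^ 2) ^ ((1 : ℝ) / 2)
      ≤ (C ^ 2) ^ ((1 : ℝ) / 2) :=
        Real.rpow_le_rpow (integral_nonneg fun _ => sq_nonneg _) hint (by norm_num)
    _ = C := by rw [← Real.sqrt_eq_rpow, Real.sqrt_sq hC0]

section

variable {E : Type*} [NormedAddCommGroup E] [NormedSpace ℝ E] {K : ℝ → ℝ} {Q : E} {H : ℝ → E}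
  {f : ℝ → E → E}

lemma norm_sub_eq_of_eq_smul_add (hf : ∀ t φ, f t φ = (K t * (‖φ‖ / (1 + ‖φ‖))) • Q + H t)
    (t : ℝ) (φ₁ φ₂ : E) :
    ‖f t φ₁ - f t φ₂‖ = |K t| * (|‖φ₁‖ / (1 + ‖φ₁‖) - ‖φ₂‖ / (1 + ‖φ₂‖)| * ‖Q‖) := by
  rw [hf, hf, add_sub_add_right_eq_sub, ← sub_smul, ← mul_sub, norm_smul, Real.norm_eq_abs,
    abs_mul, mul_assoc]

lemma rpow_half_integral_Ioc_norm_sub_sq_le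
    (hf : ∀ t φ, f t φ = (K t * (‖φ‖ / (1 + ‖φ‖))) • Q + H t) {KB : ℝ}
    (hKB : ∀ t, (∫ s in Ioc t (t + 1), K s ^ 2) ^ ((1 : ℝ) / 2) ≤ KB) (φ₁ φ₂ : E) (t : ℝ) :
    (∫ s in Ioc t (t + 1), ‖f s φ₁ - f s φ₂‖ ^ 2) ^ ((1 : ℝ) / 2) ≤
      KB * ‖Q‖ * (‖φ₁ - φ₂‖ / (1 + ‖φ₁ - φ₂‖)) := by
  set c := |‖φ₁‖ / (1 + ‖φ₁‖) - ‖φ₂‖ / (1 + ‖φ₂‖)| * ‖Q‖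
  have hc : 0 ≤ c := by positivity
  have hsq : ∀ s, ‖f s φ₁ - f s φ₂‖ ^ 2 = (K s * c) ^ 2 := fun s => by
    rw [norm_sub_eq_of_eq_smul_add hf, mul_pow, sq_abs, ← mul_pow]
  simp_rw [hsq]
  rw [rpow_half_integral_mul_const_sq, abs_of_nonneg hc]
  calc (∫ s in Ioc t (t + 1), K s ^ 2) ^ ((1 : ℝ) / 2) * c
      ≤ KB * c := mul_le_mul_of_nonneg_right (hKB t) hc
    _ ≤ KB * (‖φ₁ - φ₂‖ / (1 + ‖φ₁ - φ₂‖) * ‖Q‖) :=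
      mul_le_mul_of_nonneg_left
        (mul_le_mul_of_nonneg_right (abs_norm_div_one_add_norm_sub_le φ₁ φ₂) (norm_nonneg Q))
        ((Real.rpow_nonneg (integral_nonneg fun _ => sq_nonneg _) _).trans (hKB t))
    _ = KB * ‖Q‖ * (‖φ₁ - φ₂‖ / (1 + ‖φ₁ - φ₂‖)) := by ring

lemma abs_mul_norm_le_of_lipschitz [Nontrivial E]
    (hf : ∀ t φ, f t φ = (K t * (‖φ‖ / (1 + ‖φ‖))) • Q + H t) {L : ℝ}
    (hL : ∀ t φ₁ φ₂, ‖f t φ₁ - f t φ₂‖ ≤ L * ‖φ₁ - φ₂‖) (t : ℝ) :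
    |K t| * ‖Q‖ ≤ L := by
  refine le_of_forall_pos_mul_div_one_add_le fun r hr => ?_
  obtain ⟨φ, rfl⟩ := exists_norm_eq E hr.le
  have := hL t φ 0
  rw [norm_sub_eq_of_eq_smul_add hf, norm_zero, zero_div, sub_zero, sub_zero,
    abs_of_nonneg (a := ‖φ‖ / (1 + ‖φ‖)) (by positivity)] at this
  linarith

end

theorem meirKeeler_but_not_contraction_L2_general
    {n : ℕ} (Ω : Set (EuclideanSpace ℝ (Fin n)))
    (K : ℝ → ℝ)
    (Q : MeasureTheory.Lp ℝ 2 (MeasureTheory.volume.restrict Ω))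
    (H : ℝ → MeasureTheory.Lp ℝ 2 (MeasureTheory.volume.restrict Ω))
    (KB : ℝ)
    (hKB : IsLUB {y : ℝ | ∃ t : ℝ, y = (∫ s in Set.Ioc t (t + 1), K s ^ 2) ^ ((1 : ℝ) / 2)} KB)
    (hKQ : 1 ≤ KB * ‖Q‖)
    (f : ℝ → MeasureTheory.Lp ℝ 2 (MeasureTheory.volume.restrict Ω) →
      MeasureTheory.Lp ℝ 2 (MeasureTheory.volume.restrict Ω))
    (hf : ∀ t φ, f t φ = (K t * (‖φ‖ / (1 + ‖φ‖))) • Q + H t) :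
    (∀ ε : ℝ, 0 < ε → ∃ δ : ℝ, 0 < δ ∧
      ∀ φ₁ φ₂, ε ≤ ‖φ₁ - φ₂‖ → ‖φ₁ - φ₂‖ < ε + δ →
        ∀ t : ℝ, (∫ s in Set.Ioc t (t + 1), ‖f s φ₁ - f s φ₂‖ ^ 2) ^ ((1 : ℝ) / 2) <
          KB * ‖Q‖ * ε) ∧
    ¬ ∃ Kt : ℝ, 0 < Kt ∧ Kt < 1 ∧ ∀ (t : ℝ) φ₁ φ₂,
        ‖f t φ₁ - f t φ₂‖ ≤ Kt * ‖φ₁ - φ₂‖ := by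
  have hmean (t : ℝ) : (∫ s in Ioc t (t + 1), K s ^ 2) ^ ((1 : ℝ) / 2) ≤ KB := hKB.1 ⟨t, rfl⟩
  refine ⟨fun ε hε => ⟨ε ^ 2, by positivity, fun φ₁ φ₂ _ hlt t => ?_⟩, ?_⟩
  · calc _ ≤ KB * ‖Q‖ * (‖φ₁ - φ₂‖ / (1 + ‖φ₁ - φ₂‖)) :=
          rpow_half_integral_Ioc_norm_sub_sq_le hf hmean φ₁ φ₂ t
      _ < KB * ‖Q‖ * ε :=
          mul_lt_mul_of_pos_left (div_one_add_lt_of_lt_add_sq (norm_nonneg _) hε hlt)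
            (by linarith)
  · rintro ⟨L, -, hL1, hL⟩
    have hQ : 0 < ‖Q‖ := (norm_nonneg Q).lt_of_ne fun h => by rw [← h, mul_zero] at hKQ; linarith
    have : Nontrivial (Lp ℝ 2 (volume.restrict Ω)) := nontrivial_of_ne Q 0 (norm_pos_iff.1 hQ)
    have hK (t : ℝ) : |K t| ≤ L / ‖Q‖ :=
      (le_div_iff₀ hQ).2 (abs_mul_norm_le_of_lipschitz hf hL t)
    have hKB_le : KB ≤ L / ‖Q‖ := hKB.2 fun _ ⟨t, ht⟩ => ht ▸ rpow_half_integral_Ioc_sq_le hK t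
    linarith [(le_div_iff₀ hQ).1 hKB_le]

/-- The function `f(t,φ) = K(t) (‖φ‖/(1+‖φ‖)) Q + H(t)` on `X = L²(Ω)` satisfies the
Meir–Keeler-type condition with constant `‖K‖_{BS²} ‖Q‖`, but is not a uniformly strict
contraction in its second variable. -/
theorem meirKeeler_but_not_contraction_L2
    {n : ℕ} (Ω : Set (EuclideanSpace ℝ (Fin n)))
    (hΩo : IsOpen Ω) (hΩb : Bornology.IsBounded Ω)
    (K : ℝ → ℝ) (hK : ∀ t, 0 < K t)
    (Q : MeasureTheory.Lp ℝ 2 (MeasureTheory.volume.restrict Ω)) (hQ : 0 ≤ Q)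
    (H : ℝ → MeasureTheory.Lp ℝ 2 (MeasureTheory.volume.restrict Ω))
    (hH : ∀ t, 0 ≤ H t)
    (KB : ℝ)
    (hKB : IsLUB {y : ℝ | ∃ t : ℝ, y = (∫ s in Set.Ioc t (t + 1), K s ^ 2) ^ ((1 : ℝ) / 2)} KB)
    (hKQ : 1 ≤ KB * ‖Q‖)
    (f : ℝ → MeasureTheory.Lp ℝ 2 (MeasureTheory.volume.restrict Ω) →
      MeasureTheory.Lp ℝ 2 (MeasureTheory.volume.restrict Ω))
    (hf : ∀ t φ, f t φ = (K t * (‖φ‖ / (1 + ‖φ‖))) • Q + H t) :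
    (∀ ε : ℝ, 0 < ε → ∃ δ : ℝ, 0 < δ ∧
      ∀ φ₁ φ₂, ε ≤ ‖φ₁ - φ₂‖ → ‖φ₁ - φ₂‖ < ε + δ →
        ∀ t : ℝ, (∫ s in Set.Ioc t (t + 1), ‖f s φ₁ - f s φ₂‖ ^ 2) ^ ((1 : ℝ) / 2) <
          KB * ‖Q‖ * ε) ∧
    ¬ ∃ Kt : ℝ, 0 < Kt ∧ Kt < 1 ∧ ∀ (t : ℝ) φ₁ φ₂,
        ‖f t φ₁ - f t φ₂‖ ≤ Kt * ‖φ₁ - φ₂‖ :=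
  meirKeeler_but_not_contraction_L2_general Ω K Q H KB hKB hKQ f hf
end
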